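/- arXiv:2511.05440 — 4 statements merged into one kernel-verified Lean document; each statement's English description precedes it below -/
import Mathlib

section
/- Let G be a k×n matrix over F₂ generating a linear code C. Then the rank of G·Gᵀ equals k minus the dimension of the hull of C, where the hull of C is the intersection of C with its dual code C⊥ = {x ∈ F₂ⁿ : x·y = 0 for all y ∈ C}. -/
open Matrix

/-- The dual code of a binary code `C`: all vectors orthogonal to every codeword. -/
def dualCode {ι : Type*} [Fintype ι] (C : Submodule (ZMod 2) (ι → ZMod 2)) :
    Submodule (ZMod 2) (ι → ZMod 2) where
  carrier := {x | ∀ c ∈ C, x ⬝ᵥ c = 0}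
  add_mem' := by
    intro a b ha hb c hc
    simp [add_dotProduct, ha c hc, hb c hc]
  zero_mem' := by
    intro c hc
    simp
  smul_mem' := by
    intro r a ha c hc
    simp [smul_dotProduct, ha c hc]

/-- The row space (the code generated by the rows) of a matrix over `F₂`. -/
def rowSpace {k : ℕ} {ι : Type*} [Fintype ι] (G : Matrix (Fin k) ι (ZMod 2)) :
    Submodule (ZMod 2) (ι → ZMod 2) :=
  Submodule.span (ZMod 2) (Set.range fun i => G i)

/-- The hull of a binary code: `C ∩ C⊥`. -/
def hullCode {ι : Type*} [Fintype ι] (C : Submodule (ZMod 2) (ι → ZMod 2)) :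
    Submodule (ZMod 2) (ι → ZMod 2) :=
  C ⊓ dualCode C

/-! Since `C` is the image of `Gᵀ`, the rank of `G Gᵀ` is the dimension of `G(C)`. The kernel of
`G` restricted to `C` is `C ∩ ker G = C ∩ C⊥`, and rank–nullity on `C` (of dimension `k`) gives the
formula. -/

theorem Submodule.finrank_map_add_finrank_inf_ker {K V W : Type*} [DivisionRing K]
    [AddCommGroup V] [Module K V] [AddCommGroup W] [Module K W] (f : V →ₗ[K] W)
    (p : Submodule K V) [FiniteDimensional K p] :
    Module.finrank K (p.map f) + Module.finrank K ↥(p ⊓ LinearMap.ker f) =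
      Module.finrank K p := by
  rw [← (f.domRestrict p).finrank_range_add_finrank_ker, LinearMap.range_domRestrict,
    LinearMap.ker_domRestrict, ← Submodule.finrank_map_subtype_eq, Submodule.map_comap_subtype]

section

variable {k : ℕ} {ι : Type*} [Fintype ι] (G : Matrix (Fin k) ι (ZMod 2))

theorem rowSpace_eq_range_mulVecLin_transpose : rowSpace G = LinearMap.range Gᵀ.mulVecLin := by
  rw [range_mulVecLin, col_transpose]
  rfl

theorem mem_dualCode_rowSpace_iff {x : ι → ZMod 2} : x ∈ dualCode (rowSpace G) ↔ G *ᵥ x = 0 := by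
  have hrow : G *ᵥ x = 0 ↔ ∀ i, x ⬝ᵥ G i = 0 := by
    simp only [funext_iff, mulVec, dotProduct_comm x, Pi.zero_apply]
  rw [hrow]
  refine ⟨fun hx i => hx _ (Submodule.subset_span ⟨i, rfl⟩), fun hx c hc => ?_⟩
  have hspan : rowSpace G ≤ LinearMap.ker (dotProductBilin (ZMod 2) (ZMod 2) x) :=
    Submodule.span_le.mpr (Set.range_subset_iff.mpr hx)
  exact hspan hc

theorem dualCode_rowSpace_eq_ker : dualCode (rowSpace G) = LinearMap.ker G.mulVecLin := by
  ext x
  exact mem_dualCode_rowSpace_iff G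

theorem hullCode_rowSpace_eq_inf_ker :
    hullCode (rowSpace G) = rowSpace G ⊓ LinearMap.ker G.mulVecLin := by
  rw [hullCode, dualCode_rowSpace_eq_ker]

theorem rank_mul_transpose_eq_finrank_map :
    (G * Gᵀ).rank = Module.finrank (ZMod 2) ((rowSpace G).map G.mulVecLin) := by
  rw [Matrix.rank, mulVecLin_mul, LinearMap.range_comp, rowSpace_eq_range_mulVecLin_transpose]

theorem finrank_rowSpace (hG : LinearIndependent (ZMod 2) (fun i => G i)) :
    Module.finrank (ZMod 2) (rowSpace G) = k := by
  rw [rowSpace, finrank_span_eq_card hG, Fintype.card_fin]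

end

/-- rank(G·Gᵀ) = k − dim Hull(C) for a generator matrix G of a binary code C. -/
theorem stmt_0 {k n : ℕ} (G : Matrix (Fin k) (Fin n) (ZMod 2))
    (hG : LinearIndependent (ZMod 2) (fun i => G i)) :
    (G * Gᵀ).rank = k - Module.finrank (ZMod 2) ↥(hullCode (rowSpace G)) := by
  have hrank := (rowSpace G).finrank_map_add_finrank_inf_ker G.mulVecLin
  rw [← hullCode_rowSpace_eq_inf_ker, finrank_rowSpace G hG,
    ← rank_mul_transpose_eq_finrank_map] at hrank
  omega
end

section
/- Let C ⊆ F₂ⁿ be a linear code of dimension k with generator matrix G, and let C₁ be the code generated by G₁ = [G | v] for some column vector v ∈ F₂ᵏ. If ℓ = dim(Hull(C)) and ℓ₁ = dim(Hull(C₁)), then ℓ − 1 ≤ ℓ₁ ≤ ℓ + 1. -/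
/-!
Through the injective map `a ↦ a ᵥ* G`, the hull of the row space of `G` is the image of the
kernel of the Gram matrix `G * Gᵀ`, and appending the column `v` replaces `G * Gᵀ` by
`G * Gᵀ + vecMulVec v v`. The two Gram matrices agree on the hyperplane `a ⬝ᵥ v = 0`, so their
kernels have the same intersection with it, and hence differ in dimension by at most one.
-/

open Matrix

open Module LinearMap

theorem Submodule.finrank_le_finrank_inf_ker_add_one {K V : Type*} [Field K] [AddCommGroup V]
    [Module K V] [FiniteDimensional K V] (p : Submodule K V) (f : V →ₗ[K] K) :
    finrank K p ≤ finrank K ↥(p ⊓ ker f) + 1 := by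
  have hsup := Submodule.finrank_sup_add_finrank_inf_eq p (ker f)
  have hsup_le := Submodule.finrank_le (p ⊔ ker f)
  have hrank_nullity := finrank_range_add_finrank_ker f
  have hrange : finrank K (range f) ≤ 1 := finrank_self K ▸ Submodule.finrank_le (range f)
  omega

theorem LinearMap.finrank_ker_le_finrank_ker_add_one {K V W : Type*} [Field K] [AddCommGroup V]
    [Module K V] [FiniteDimensional K V] [AddCommGroup W] [Module K W] {φ ψ : V →ₗ[K] W}
    (f : V →ₗ[K] K) (h : ∀ x ∈ ker f, φ x = ψ x) :
    finrank K (ker φ) ≤ finrank K (ker ψ) + 1 := by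
  have hle : ker φ ⊓ ker f ≤ ker ψ := fun x ⟨hφ, hf⟩ => by
    rw [mem_ker, ← h x hf]
    exact hφ
  exact (ker φ).finrank_le_finrank_inf_ker_add_one f |>.trans
    (Nat.add_le_add_right (Submodule.finrank_mono hle) 1)

theorem Matrix.vecMul_dotProduct_vecMul {R m n : Type*} [CommSemiring R] [Fintype m] [Fintype n]
    (G : Matrix m n R) (a b : m → R) : (a ᵥ* G) ⬝ᵥ (b ᵥ* G) = (a ᵥ* (G * Gᵀ)) ⬝ᵥ b := by
  rw [← dotProduct_mulVec, mulVec_vecMul, dotProduct_mulVec]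

theorem mem_dualCode {ι : Type*} [Fintype ι] {C : Submodule (ZMod 2) (ι → ZMod 2)}
    {x : ι → ZMod 2} : x ∈ dualCode C ↔ ∀ c ∈ C, x ⬝ᵥ c = 0 :=
  Iff.rfl

theorem hullCode_rowSpace {k : ℕ} {ι : Type*} [Fintype ι] (G : Matrix (Fin k) ι (ZMod 2)) :
    hullCode (rowSpace G) = (ker (G * Gᵀ).vecMulLinear).map G.vecMulLinear := by
  have hrow : rowSpace G = range G.vecMulLinear := (range_vecMulLinear G).symm
  ext x
  simp only [hullCode, hrow, Submodule.mem_inf, mem_dualCode, Submodule.mem_map, mem_ker,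
    mem_range, vecMulLinear_apply, forall_exists_index, forall_apply_eq_imp_iff]
  constructor
  · rintro ⟨⟨a, rfl⟩, ha⟩
    refine ⟨a, dotProduct_eq_zero _ fun b => ?_, rfl⟩
    rw [← Matrix.vecMul_dotProduct_vecMul]
    exact ha b
  · rintro ⟨a, ha, rfl⟩
    exact ⟨⟨a, rfl⟩, fun b => by rw [Matrix.vecMul_dotProduct_vecMul, ha, zero_dotProduct]⟩

theorem finrank_hullCode_rowSpace {k : ℕ} {ι : Type*} [Fintype ι] (G : Matrix (Fin k) ι (ZMod 2))
    (hG : LinearIndependent (ZMod 2) (fun i => G i)) :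
    finrank (ZMod 2) (hullCode (rowSpace G)) = finrank (ZMod 2) (ker (G * Gᵀ).vecMulLinear) := by
  rw [hullCode_rowSpace]
  exact ((ker _).equivMapOfInjective _ (Matrix.vecMul_injective_iff.mpr hG)).finrank_eq.symm

theorem Matrix.mul_transpose_eq_add_vecMulVec_of_snoc {R : Type*} [CommSemiring R] {k n : ℕ}
    {G : Matrix (Fin k) (Fin n) R} {v : Fin k → R} {G₁ : Matrix (Fin k) (Fin (n + 1)) R}
    (hG₁ : ∀ i, G₁ i = Fin.snoc (G i) (v i)) : G₁ * G₁ᵀ = G * Gᵀ + vecMulVec v v := by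
  ext i j
  simp [mul_apply, Fin.sum_univ_castSucc, hG₁, vecMulVec_apply]

theorem linearIndependent_rows_of_snoc {R : Type*} [CommSemiring R] {k n : ℕ}
    {G : Matrix (Fin k) (Fin n) R} {v : Fin k → R} {G₁ : Matrix (Fin k) (Fin (n + 1)) R}
    (hG₁ : ∀ i, G₁ i = Fin.snoc (G i) (v i)) (hG : LinearIndependent R (fun i => G i)) :
    LinearIndependent R (fun i => G₁ i) := by
  refine LinearIndependent.of_comp (funLeft R R Fin.castSucc) ?_
  convert hG with i
  ext j
  simp [funLeft_apply, hG₁]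

/-- appending a column to a generator matrix changes the hull dimension by
at most one. -/
theorem stmt_2 {k n : ℕ} (G : Matrix (Fin k) (Fin n) (ZMod 2))
    (hG : LinearIndependent (ZMod 2) (fun i => G i))
    (v : Fin k → ZMod 2) (G₁ : Matrix (Fin k) (Fin (n + 1)) (ZMod 2))
    (hG₁ : ∀ i, G₁ i = Fin.snoc (G i) (v i)) :
    Module.finrank (ZMod 2) ↥(hullCode (rowSpace G)) - 1 ≤
      Module.finrank (ZMod 2) ↥(hullCode (rowSpace G₁)) ∧
    Module.finrank (ZMod 2) ↥(hullCode (rowSpace G₁)) ≤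
      Module.finrank (ZMod 2) ↥(hullCode (rowSpace G)) + 1 := by
  rw [finrank_hullCode_rowSpace G hG, finrank_hullCode_rowSpace G₁
    (linearIndependent_rows_of_snoc hG₁ hG), Matrix.mul_transpose_eq_add_vecMulVec_of_snoc hG₁]
  have hagree : ∀ a ∈ ker (dotProductBilin (ZMod 2) (ZMod 2) v),
      (G * Gᵀ).vecMulLinear a = (G * Gᵀ + vecMulVec v v).vecMulLinear a := fun a ha => by
    rw [mem_ker, dotProductBilin_apply_apply, dotProduct_comm] at ha
    simp [vecMul_vecMulVec, ha]
  exact ⟨Nat.sub_le_of_le_add (finrank_ker_le_finrank_ker_add_one _ hagree),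
    finrank_ker_le_finrank_ker_add_one _ fun a ha => (hagree a ha).symm⟩
end

section
/- Let n be even and let G = [I_{n−1} | 1] generate the even-weight code Eₙ ⊆ F₂ⁿ (where 1 is the all-ones column). For every column vector v ∈ F₂^{n−1}, the hull of the code C' generated by [I_{n−1} | 1 | v] has dimension at most 1, and is contained in the span of the vector (1,...,1,0) of length n+1. -/
open Matrix

/-- The matrix [I_{n-1} | 1 | v] (here the number of rows is m = n - 1): identity block,
an all-ones column, and the column v. -/
def augMat (m : ℕ) (v : Fin m → ZMod 2) :
    Matrix (Fin m) (Fin m ⊕ (Unit ⊕ Unit)) (ZMod 2) :=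
  fun i => Sum.elim (fun j => if i = j then 1 else 0)
    (Sum.elim (fun _ => 1) (fun _ => v i))

/-- The vector (1, ..., 1, 0) of length n + 1: ones on the first n = m + 1 coordinates,
zero on the last coordinate. -/
def onesZero (m : ℕ) : Fin m ⊕ (Unit ⊕ Unit) → ZMod 2 :=
  Sum.elim (fun _ => 1) (Sum.elim (fun _ => 1) (fun _ => 0))

/-! A codeword of `C'` is `c = (a, ∑ a, a ⬝ᵥ v)` for some `a ∈ F₂^{n-1}`, and `c` is orthogonal
to the rows of `[I | 1 | v]` exactly when `a = (∑ a) • 1 + (a ⬝ᵥ v) • v`. Writing `t = a ⬝ᵥ v`,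
summing over the odd number `n - 1` of coordinates gives `t * ∑ v = 0`, while dotting with `v`
gives `t = (∑ a) * ∑ v` because `x * x = x` in `F₂`; hence `t = t * ∑ v = 0`, so `a` is constant
and `c` is a multiple of `(1, …, 1, 0)`. -/

theorem mem_rowSpace_iff_exists_vecMul {k : ℕ} {ι : Type*} [Fintype ι]
    {G : Matrix (Fin k) ι (ZMod 2)} {c : ι → ZMod 2} :
    c ∈ rowSpace G ↔ ∃ a, a ᵥ* G = c := by
  simp only [rowSpace, Submodule.mem_span_range_iff_exists_fun, vecMul_eq_sum]

theorem mulVec_eq_zero_of_mem_dualCode_rowSpace {k : ℕ} {ι : Type*} [Fintype ι]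
    {G : Matrix (Fin k) ι (ZMod 2)} {x : ι → ZMod 2} (hx : x ∈ dualCode (rowSpace G)) :
    G *ᵥ x = 0 :=
  funext fun i => by
    rw [mulVec, dotProduct_comm]
    exact hx _ (Submodule.subset_span ⟨i, rfl⟩)

theorem dotProduct_eq_zero_of_forall_eq_sum_add_mul {ι : Type*} [Fintype ι]
    (hodd : Odd (Fintype.card ι)) {a v : ι → ZMod 2}
    (ha : ∀ i, a i = ∑ j, a j + (a ⬝ᵥ v) * v i) : a ⬝ᵥ v = 0 := by
  set s := ∑ j, a j
  set t := a ⬝ᵥ v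
  set V := ∑ i, v i
  have idem : ∀ x : ZMod 2, x * x = x := by decide
  have hsum : t * V = 0 := by
    have h : s = s + t * V := by
      calc s = ∑ i, (s + t * v i) := Finset.sum_congr rfl fun i _ => ha i
        _ = (Fintype.card ι : ZMod 2) * s + t * V := by
          rw [Finset.sum_add_distrib, ← Finset.mul_sum, Finset.sum_const, nsmul_eq_mul,
            Finset.card_univ]
        _ = s + t * V := by rw [hodd.natCast_zmod_two, one_mul]
    linear_combination -h
  have hdot : t = s * V := by
    calc t = ∑ i, (s + t * v i) * v i := Finset.sum_congr rfl fun i _ => by rw [← ha i]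
      _ = s * V + t * V := by
        simp only [add_mul, mul_assoc, idem, Finset.sum_add_distrib, V, Finset.mul_sum]
      _ = s * V := by rw [hsum, add_zero]
  calc t = s * (V * V) := by rw [hdot, idem]
    _ = t * V := by rw [hdot, mul_assoc]
    _ = 0 := hsum

section augMat

variable {m : ℕ} (v : Fin m → ZMod 2)

theorem vecMul_augMat (a : Fin m → ZMod 2) :
    a ᵥ* augMat m v = Sum.elim a (Sum.elim (fun _ => ∑ i, a i) (fun _ => a ⬝ᵥ v)) := by
  ext (j | _ | _) <;> simp [vecMul, dotProduct, augMat]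

theorem augMat_mulVec (c : Fin m ⊕ (Unit ⊕ Unit) → ZMod 2) (i : Fin m) :
    (augMat m v *ᵥ c) i =
      c (Sum.inl i) + c (Sum.inr (Sum.inl ())) + v i * c (Sum.inr (Sum.inr ())) := by
  simp [mulVec, dotProduct, augMat, add_assoc]

theorem hullCode_rowSpace_augMat_le (hn : Even (m + 1)) :
    hullCode (rowSpace (augMat m v)) ≤ Submodule.span (ZMod 2) {onesZero m} := by
  rintro c ⟨hcC, hcD⟩
  obtain ⟨a, rfl⟩ := mem_rowSpace_iff_exists_vecMul.mp hcC
  have ha : ∀ i, a i = ∑ j, a j + (a ⬝ᵥ v) * v i := fun i => by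
    have h := congr_fun (mulVec_eq_zero_of_mem_dualCode_rowSpace hcD) i
    simp only [augMat_mulVec, vecMul_augMat, Sum.elim_inl, Sum.elim_inr, Pi.zero_apply,
      add_assoc, mul_comm (v i)] at h
    exact CharTwo.add_eq_zero.mp h
  have hodd : Odd (Fintype.card (Fin m)) := by
    simpa [Nat.even_add_one] using hn
  have ht := dotProduct_eq_zero_of_forall_eq_sum_add_mul hodd ha
  refine Submodule.mem_span_singleton.mpr ⟨∑ j, a j, ?_⟩
  ext (j | _ | _)
  · simp [vecMul_augMat, onesZero, ht, ha j]
  all_goals simp [vecMul_augMat, onesZero, ht]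

end augMat

/-- with n = m + 1 even, for any column v, the hull of the code generated by
[I_{n-1} | 1 | v] is contained in the span of (1,...,1,0), so it has dimension at most 1. -/
theorem stmt_13 {m : ℕ} (hn : Even (m + 1)) (v : Fin m → ZMod 2) :
    hullCode (rowSpace (augMat m v)) ≤ Submodule.span (ZMod 2) {onesZero m} ∧
    Module.finrank (ZMod 2) ↥(hullCode (rowSpace (augMat m v))) ≤ 1 := by
  have hle := hullCode_rowSpace_augMat_le v hn
  refine ⟨hle, (Submodule.finrank_mono hle).trans ?_⟩
  simpa using finrank_span_le_card (R := ZMod 2) {onesZero m}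
end

section
/- Let n be odd and Eₙ the even-weight code of length n with generator matrix G = [I_{n−1} | 1]. For every column vector v ∈ F₂^{n−1}, the code generated by [I_{n−1} | 1 | v] has trivial hull. -/
open Matrix

/-!
A codeword `x G` of `C = rowSpace G` lies in `C⊥` iff `x (G Gᵀ) = 0`, so `C` is LCD as soon as the
Gram matrix `G Gᵀ` is nonsingular. For `G = [I | 1 | v]` the Gram matrix is `I + 1 1ᵀ + v vᵀ`, and
`x (I + 1 1ᵀ + v vᵀ) = 0` reads `x = s 1 + t v` with `s = x ⬝ 1`, `t = x ⬝ v`. Dotting with `1` and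
with `v` (using that `m` is even and `vᵢ² = vᵢ`) gives `s = t w` and `t = s w + t w` for
`w = v ⬝ 1`, whence `t = 2 t w = 0`, `s = 0` and `x = 0`.
-/

/-- Massey's criterion for LCD codes. -/
theorem hullCode_rowSpace_eq_bot {k : ℕ} {ι : Type*} [Fintype ι]
    (G : Matrix (Fin k) ι (ZMod 2)) (hG : ∀ x, x ᵥ* (G * Gᵀ) = 0 → x = 0) :
    hullCode (rowSpace G) = ⊥ := by
  refine eq_bot_iff.2 fun c ⟨hcC, hcD⟩ => ?_
  have hcC' : c ∈ LinearMap.range G.vecMulLinear := by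
    rwa [range_vecMulLinear]
  obtain ⟨x, rfl⟩ := hcC'
  suffices hx : x ᵥ* (G * Gᵀ) = 0 by
    simp [hG x hx]
  ext i
  rw [← vecMul_vecMul, vecMul_transpose, mulVec, dotProduct_comm]
  exact hcD _ (Submodule.subset_span ⟨i, rfl⟩)

lemma augMat_mul_transpose (m : ℕ) (v : Fin m → ZMod 2) :
    augMat m v * (augMat m v)ᵀ = 1 + vecMulVec 1 1 + vecMulVec v v := by
  ext i j
  simp [mul_apply, augMat, Fintype.sum_sum_type, one_apply, vecMulVec_apply, add_assoc]

lemma ZMod.two_mul_self (a : ZMod 2) : a * a = a := by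
  fin_cases a <;> rfl

lemma eq_zero_of_add_smul_one_add_smul_eq_zero {ι : Type*} [Fintype ι]
    (hι : Even (Fintype.card ι)) (v x : ι → ZMod 2)
    (h : x + (x ⬝ᵥ 1) • 1 + (x ⬝ᵥ v) • v = 0) : x = 0 := by
  set s := x ⬝ᵥ 1
  set t := x ⬝ᵥ v
  set w := v ⬝ᵥ 1
  have hx : x = s • 1 + t • v :=
    funext fun i => CharTwo.add_eq_zero.1 (by simpa [add_assoc] using congrFun h i)
  have hvv : v ⬝ᵥ v = w := by
    simp only [w, dotProduct, ZMod.two_mul_self, Pi.one_apply, mul_one]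
  have hs : s = t * w := calc
    s = (s • 1 + t • v) ⬝ᵥ 1 := congrArg (· ⬝ᵥ 1) hx
    _ = s * Fintype.card ι + t * w := by
      rw [add_dotProduct, smul_dotProduct, smul_dotProduct, one_dotProduct_one]; rfl
    _ = t * w := by rw [(ZMod.natCast_eq_zero_iff_even).2 hι, mul_zero, zero_add]
  have ht : t = s * w + t * w := calc
    t = (s • 1 + t • v) ⬝ᵥ v := congrArg (· ⬝ᵥ v) hx
    _ = s * w + t * w := by
      rw [add_dotProduct, smul_dotProduct, smul_dotProduct, hvv, dotProduct_comm 1 v]; rfl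
  have ht0 : t = 0 := by
    rwa [hs, mul_assoc, ZMod.two_mul_self, CharTwo.add_self_eq_zero] at ht
  rw [hx, hs, ht0]
  simp

/-- with n = m + 1 odd, for any column v, the code generated by
[I_{n-1} | 1 | v] has trivial hull. -/
theorem stmt_14 {m : ℕ} (hn : Odd (m + 1)) (v : Fin m → ZMod 2) :
    hullCode (rowSpace (augMat m v)) = ⊥ := by
  have hm : Even (Fintype.card (Fin m)) := by
    simpa [Nat.odd_add_one] using hn
  refine hullCode_rowSpace_eq_bot _ fun x hx => ?_
  rw [augMat_mul_transpose, vecMul_add, vecMul_add, vecMul_one, vecMul_vecMulVec,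
    vecMul_vecMulVec] at hx
  exact eq_zero_of_add_smul_one_add_smul_eq_zero hm v x hx
end
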